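/- (Termination of the inner sampling loop of Algorithm 1.) Let L_g > 0 and suppose each gradient ∇f_i is L_g-Lipschitz continuous on ℝⁿ and that for each i ∈ N there exists x_i* ∈ ℝⁿ with ∇f_i(x_i*) = 0. Let x ∈ ℝⁿ and D_0 ≥ 0 satisfy max_{i ∈ N} ‖x − x_i*‖ ≤ D_0. Let ε_g > 0, γ > 1, 0 < Δ ≤ Δ_max, and suppose ‖∇f(x)‖ > ε_g. Then for every natural number j with ε_g · γ^j > 10 L_g D_0 and every nonempty G ⊆ N with |G| ≥ ⌈(1 − Δ/(γ^j Δ_max))·d⌉, one has ‖∇f_G(x)‖ > 4ε_g/5. In particular, the test ‖∇f_G(x)‖ > 4ε_g/5 of Step 1.2 is satisfied for every admissible subsample as soon as j > max{log_γ(10 L_g D_0 ε_g^{−1}), 0}. -/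

import Mathlib

open scoped RealInnerProductSpace

/-- The spectral (ℓ²-operator) norm of a real matrix. -/
noncomputable def specNorm {n : ℕ} (A : Matrix (Fin n) (Fin n) ℝ) : ℝ :=
  ‖Matrix.toEuclideanCLM (𝕜 := ℝ) A‖

/-- The smallest eigenvalue of a (Hermitian) real matrix. -/
noncomputable def lambdaMin {n : ℕ} (A : Matrix (Fin n) (Fin n) ℝ) : ℝ :=
  if h : A.IsHermitian then ⨅ i, h.eigenvalues i else 0

/-- The Hessian matrix of `f` at `x`, given by second directional derivatives. -/
noncomputable def hessian {n : ℕ} (f : EuclideanSpace ℝ (Fin n) → ℝ)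
    (x : EuclideanSpace ℝ (Fin n)) : Matrix (Fin n) (Fin n) ℝ :=
  fun i j => iteratedFDeriv ℝ 2 f x ![EuclideanSpace.single i 1, EuclideanSpace.single j 1]

/-!
Each `∇fᵢ` vanishes at `xᵢ*` and is `L_g`-Lipschitz, so `‖∇fᵢ(x)‖ ≤ L_g D₀`. The subsample `G`
misses at most `d / γ^j` indices, and `L_g D₀ < ε_g γ^j / 10`, so dropping them changes
`∑ᵢ ∇fᵢ(x)`, of norm `> d ε_g`, by less than `d ε_g / 10`. Hence
`‖∑_{i ∈ G} ∇fᵢ(x)‖ > 9 d ε_g / 10 ≥ 9 |G| ε_g / 10`, and `9/10 > 4/5`.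
-/

open Finset

lemma gradient_const_mul_sum {F ι : Type*} [NormedAddCommGroup F] [InnerProductSpace ℝ F]
    [CompleteSpace F] (s : Finset ι) {f : ι → F → ℝ} {x : F}
    (hf : ∀ i ∈ s, DifferentiableAt ℝ (f i) x) (c : ℝ) :
    gradient (fun y => c * ∑ i ∈ s, f i y) x = c • ∑ i ∈ s, gradient (f i) x := by
  unfold gradient
  rw [fderiv_const_mul (DifferentiableAt.fun_sum hf), fderiv_fun_sum hf, map_smul, map_sum]

section Subsample

variable {E ι : Type*} [SeminormedAddCommGroup E] [Fintype ι]
  {v : ι → E} {B : ℝ}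

lemma norm_sum_le_norm_sum_add_card_compl_mul (hv : ∀ i, ‖v i‖ ≤ B) (s : Finset ι) :
    ‖∑ i, v i‖ ≤ ‖∑ i ∈ s, v i‖ + (Fintype.card ι - #s) * B := by
  classical
  have hcompl : ‖∑ i ∈ sᶜ, v i‖ ≤ (Fintype.card ι - #s) * B := by
    calc ‖∑ i ∈ sᶜ, v i‖ ≤ ∑ _i ∈ sᶜ, B := norm_sum_le_of_le _ fun i _ => hv i
      _ = (Fintype.card ι - #s) * B := by
        rw [sum_const, nsmul_eq_mul, card_compl, Nat.cast_sub s.card_le_univ]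
  calc ‖∑ i, v i‖ = ‖∑ i ∈ s, v i + ∑ i ∈ sᶜ, v i‖ := by rw [sum_add_sum_compl]
    _ ≤ _ := (norm_add_le _ _).trans (by gcongr)

lemma sub_lt_norm_average_of_card_compl_mul_le [NormedSpace ℝ E] (hv : ∀ i, ‖v i‖ ≤ B) {s : Finset ι}
    (hs : s.Nonempty) {ε δ : ℝ} (hδ : δ ≤ ε)
    (hε : ε < ‖(Fintype.card ι : ℝ)⁻¹ • ∑ i, v i‖)
    (hmissing : (Fintype.card ι - #s) * B ≤ Fintype.card ι * δ) :
    ε - δ < ‖(#s : ℝ)⁻¹ • ∑ i ∈ s, v i‖ := by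
  have hs_pos : (0 : ℝ) < #s := by exact_mod_cast hs.card_pos
  have hs_le : (#s : ℝ) ≤ Fintype.card ι := by exact_mod_cast s.card_le_univ
  have hι_pos : (0 : ℝ) < Fintype.card ι := hs_pos.trans_le hs_le
  rw [norm_smul, norm_inv, Real.norm_natCast, lt_inv_mul_iff₀ hι_pos] at hε
  rw [norm_smul, norm_inv, Real.norm_natCast, lt_inv_mul_iff₀ hs_pos]
  have := norm_sum_le_norm_sum_add_card_compl_mul hv s
  calc (#s : ℝ) * (ε - δ) ≤ Fintype.card ι * (ε - δ) := by gcongr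
    _ < ‖∑ i ∈ s, v i‖ := by linarith

end Subsample

lemma sub_le_div_of_ceil_le {d t Δ Δmax : ℝ} {m : ℕ} (hd : 0 ≤ d) (ht : 0 < t) (hΔ : 0 < Δ)
    (hΔmax : Δ ≤ Δmax) (h : ⌈(1 - Δ / (t * Δmax)) * d⌉₊ ≤ m) : d - m ≤ d / t := by
  have hratio : Δ / (t * Δmax) ≤ 1 / t := by
    rw [div_le_div_iff₀ (by nlinarith) ht]
    nlinarith
  have hm : (1 - Δ / (t * Δmax)) * d ≤ m := (Nat.le_ceil _).trans (by exact_mod_cast h)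
  have : Δ / (t * Δmax) * d ≤ d / t :=
    (mul_le_mul_of_nonneg_right hratio hd).trans_eq (by ring)
  linarith

theorem stmt_6_general {n d : ℕ} [NeZero d]
    (f : Fin d → EuclideanSpace ℝ (Fin n) → ℝ)
    (hf : ∀ i, ContDiff ℝ 2 (f i))
    (Lg : ℝ) (hLg : 0 < Lg)
    (hlip : ∀ i, ∀ y z : EuclideanSpace ℝ (Fin n),
      ‖gradient (f i) y - gradient (f i) z‖ ≤ Lg * ‖y - z‖)
    (xstar : Fin d → EuclideanSpace ℝ (Fin n))
    (hstar : ∀ i, gradient (f i) (xstar i) = 0)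
    (x : EuclideanSpace ℝ (Fin n)) (D0 : ℝ)
    (hDx : ∀ i, ‖x - xstar i‖ ≤ D0)
    (εg γ Δ Δmax : ℝ) (hεg : 0 < εg) (hγ : 1 < γ) (hΔ : 0 < Δ) (hΔmax : Δ ≤ Δmax)
    (hgrad : εg < ‖gradient (fun y => (d : ℝ)⁻¹ * ∑ i, f i y) x‖) :
    ∀ j : ℕ, 10 * Lg * D0 < εg * γ ^ j →
      ∀ G : Finset (Fin d), G.Nonempty →
        ⌈(1 - Δ / (γ ^ j * Δmax)) * (d : ℝ)⌉₊ ≤ G.card →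
        4 * εg / 5 < ‖gradient (fun y => ((G.card : ℝ))⁻¹ * ∑ i ∈ G, f i y) x‖ := by
  intro j hj G hG hcard
  have hdiff : ∀ i ∈ (univ : Finset (Fin d)), DifferentiableAt ℝ (f i) x := fun i _ =>
    ((hf i).differentiable two_ne_zero).differentiableAt
  have hbound : ∀ i, ‖gradient (f i) x‖ ≤ Lg * D0 := fun i => by
    simpa [hstar i] using (hlip i x (xstar i)).trans (mul_le_mul_of_nonneg_left (hDx i) hLg.le)
  have hγj : 0 < γ ^ j := pow_pos (zero_lt_one.trans hγ) j
  have hmissing : ((d : ℝ) - #G) * (Lg * D0) ≤ d * (εg / 10) := by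
    have hsub := sub_le_div_of_ceil_le (Nat.cast_nonneg d) hγj hΔ hΔmax hcard
    have hG_le : (#G : ℝ) ≤ d := by simpa using (Nat.cast_le (α := ℝ)).2 G.card_le_univ
    calc ((d : ℝ) - #G) * (Lg * D0) ≤ ((d : ℝ) - #G) * (εg * γ ^ j / 10) := by
          gcongr; linarith
      _ ≤ d / γ ^ j * (εg * γ ^ j / 10) := by gcongr
      _ = d * (εg / 10) := by field_simp
  rw [gradient_const_mul_sum _ hdiff] at hgrad
  rw [gradient_const_mul_sum _ fun i _ => hdiff i (mem_univ i)]
  have := sub_lt_norm_average_of_card_compl_mul_le hbound hG (by linarith : εg / 10 ≤ εg)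
    (by simpa using hgrad) (by simpa using hmissing)
  linarith

theorem stmt_6 {n d : ℕ} (hn : 1 ≤ n) [NeZero d]
    (f : Fin d → EuclideanSpace ℝ (Fin n) → ℝ)
    (hf : ∀ i, ContDiff ℝ 2 (f i))
    (Lg : ℝ) (hLg : 0 < Lg)
    (hlip : ∀ i, ∀ y z : EuclideanSpace ℝ (Fin n),
      ‖gradient (f i) y - gradient (f i) z‖ ≤ Lg * ‖y - z‖)
    (xstar : Fin d → EuclideanSpace ℝ (Fin n))
    (hstar : ∀ i, gradient (f i) (xstar i) = 0)
    (x : EuclideanSpace ℝ (Fin n)) (D0 : ℝ) (hD0 : 0 ≤ D0)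
    (hDx : ∀ i, ‖x - xstar i‖ ≤ D0)
    (εg γ Δ Δmax : ℝ) (hεg : 0 < εg) (hγ : 1 < γ) (hΔ : 0 < Δ) (hΔmax : Δ ≤ Δmax)
    (hgrad : εg < ‖gradient (fun y => (d : ℝ)⁻¹ * ∑ i, f i y) x‖) :
    ∀ j : ℕ, 10 * Lg * D0 < εg * γ ^ j →
      ∀ G : Finset (Fin d), G.Nonempty →
        ⌈(1 - Δ / (γ ^ j * Δmax)) * (d : ℝ)⌉₊ ≤ G.card →
        4 * εg / 5 < ‖gradient (fun y => ((G.card : ℝ))⁻¹ * ∑ i ∈ G, f i y) x‖ :=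
  stmt_6_general f hf Lg hLg hlip xstar hstar x D0 hDx εg γ Δ Δmax hεg hγ hΔ hΔmax hgrad
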